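/- Summation preserves bisimilarity of configurations: if <P₁;C> ∼ <Q₁;D> and <P₂;C> ∼ <Q₂;D>, then <P₁+P₂;C> ∼ <Q₁+Q₂;D>, in the abstract setting where the transitions of a sum configuration are exactly the union of the transitions of its two summand configurations and a sum configuration is terminal iff both summands are terminal with the same context. -/
import Mathlib


/-- A finite-support probability distribution on `Con`. -/
structure FDist (Con : Type) where
  f : Con → ℝ
  nonneg : ∀ c, 0 ≤ f c
  le_one : ∀ c, f c ≤ 1
  finSupp : (Function.support f).Finite
  sum_one : ∑ᶠ c, f c = 1

/-- The mass a distribution assigns to a set: μ(M) = Σ_{c ∈ M} μ(c). -/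
noncomputable def FDist.mass {Con : Type} (μ : FDist Con) (M : Set Con) : ℝ :=
  ∑ᶠ c ∈ M, μ.f c

section Helpers1

open Function Set

variable {Con : Type}

lemma finsum_mem_mul_left (c : ℝ) (g : Con → ℝ) (M : Set Con)
    (hg : (M ∩ support g).Finite) :
    ∑ᶠ d ∈ M, c * g d = c * ∑ᶠ d ∈ M, g d := by
  rw [finsum_mem_eq_sum g hg, Finset.mul_sum,
    finsum_mem_eq_sum_of_inter_support_eq (fun d => c * g d) (t := hg.toFinset)]
  ext d
  simp only [mem_inter_iff, mem_support, ne_eq, Finite.coe_toFinset]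
  constructor
  · rintro ⟨hM, hne⟩
    exact ⟨⟨hM, fun h => hne (by rw [h, mul_zero])⟩, hne⟩
  · rintro ⟨⟨hM, _⟩, hne⟩
    exact ⟨hM, hne⟩

lemma finsum_mem_finset_sum {ι : Type} (M : Set Con) (s : Finset ι) (g : ι → Con → ℝ)
    (h : ∀ i, (M ∩ support (g i)).Finite) :
    ∑ᶠ d ∈ M, ∑ i ∈ s, g i d = ∑ i ∈ s, ∑ᶠ d ∈ M, g i d := by
  classical
  induction s using Finset.induction with
  | empty => simp
  | @insert a s ha ih =>
    have hfin : (M ∩ support fun d => ∑ i ∈ s, g i d).Finite := by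
      refine (s.finite_toSet.biUnion fun i _ => h i).subset ?_
      rintro d ⟨hM, hd⟩
      obtain ⟨i, hi, hne⟩ : ∃ i ∈ s, g i d ≠ 0 := by
        by_contra hcon
        push_neg at hcon
        exact hd (Finset.sum_eq_zero fun i hi => hcon i hi)
      exact Set.mem_biUnion hi ⟨hM, hne⟩
    calc ∑ᶠ d ∈ M, ∑ i ∈ insert a s, g i d
        = ∑ᶠ d ∈ M, (g a d + ∑ i ∈ s, g i d) :=
          finsum_mem_congr rfl (fun d _ => Finset.sum_insert ha)
      _ = (∑ᶠ d ∈ M, g a d) + ∑ᶠ d ∈ M, ∑ i ∈ s, g i d :=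
          finsum_mem_add_distrib' (h a) hfin
      _ = ∑ i ∈ insert a s, ∑ᶠ d ∈ M, g i d := by rw [ih, Finset.sum_insert ha]

lemma mass_comb {ι : Type} [Fintype ι] (μ : FDist Con) (p : ι → ℝ) (μs : ι → FDist Con)
    (hμ : ∀ d, μ.f d = ∑ i, p i * (μs i).f d) (M : Set Con) :
    μ.mass M = ∑ i, p i * (μs i).mass M := by
  have hfin : ∀ i, (M ∩ support fun d => p i * (μs i).f d).Finite := fun i =>
    ((μs i).finSupp.inter_of_right M).subset
      (inter_subset_inter_right M (by intro d hd; exact fun h0 => hd (by simp [h0])))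
  calc μ.mass M = ∑ᶠ d ∈ M, ∑ i, p i * (μs i).f d :=
        finsum_mem_congr rfl (fun d _ => hμ d)
    _ = ∑ i, ∑ᶠ d ∈ M, p i * (μs i).f d := finsum_mem_finset_sum M _ _ hfin
    _ = ∑ i, p i * (μs i).mass M := by
        refine Finset.sum_congr rfl fun i _ => ?_
        exact finsum_mem_mul_left _ _ _ ((μs i).finSupp.inter_of_right M)

lemma FDist.mass_univ (μ : FDist Con) : μ.mass Set.univ = 1 := by
  rw [FDist.mass, finsum_mem_univ, μ.sum_one]

noncomputable def FDist.comb {ι : Type} [Fintype ι] (p : ι → ℝ) (μs : ι → FDist Con)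
    (hp : ∀ i, 0 ≤ p i) (hs : ∑ i, p i = 1) : FDist Con where
  f d := ∑ i, p i * (μs i).f d
  nonneg d := Finset.sum_nonneg fun i _ => mul_nonneg (hp i) ((μs i).nonneg d)
  le_one d := by
    calc ∑ i, p i * (μs i).f d ≤ ∑ i, p i * 1 :=
          Finset.sum_le_sum fun i _ => mul_le_mul_of_nonneg_left ((μs i).le_one d) (hp i)
      _ = 1 := by simp [hs]
  finSupp := by
    refine (Set.finite_iUnion fun i => (μs i).finSupp).subset ?_
    intro d hd
    obtain ⟨i, -, hne⟩ : ∃ i ∈ Finset.univ, p i * (μs i).f d ≠ 0 := by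
      by_contra hcon
      push_neg at hcon
      exact hd (Finset.sum_eq_zero fun i hi => hcon i hi)
    exact Set.mem_iUnion.2 ⟨i, fun h0 => hne (by simp [h0])⟩
  sum_one := by
    have hfin : ∀ i, ((Set.univ : Set Con) ∩ support fun d => p i * (μs i).f d).Finite :=
      fun i => ((μs i).finSupp.inter_of_right _).subset
        (inter_subset_inter_right _ (by intro d hd; exact fun h0 => hd (by simp [h0])))
    calc ∑ᶠ d, ∑ i, p i * (μs i).f d = ∑ᶠ d ∈ Set.univ, ∑ i, p i * (μs i).f d :=
          (finsum_mem_univ _).symm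
      _ = ∑ i, ∑ᶠ d ∈ Set.univ, p i * (μs i).f d := finsum_mem_finset_sum _ _ _ hfin
      _ = ∑ i, p i * (μs i).mass Set.univ := by
          refine Finset.sum_congr rfl fun i _ => ?_
          exact finsum_mem_mul_left _ _ _ ((μs i).finSupp.inter_of_right _)
      _ = 1 := by simp [FDist.mass_univ, hs]

end Helpers1

/-- Combined transition: convex closure of the transition relation `tr`. -/
def CTrans {Con Act : Type} (tr : Con → Act → FDist Con → Prop)
    (C : Con) (a : Act) (μ : FDist Con) : Prop :=
  ∃ (n : ℕ) (p : Fin n → ℝ) (μs : Fin n → FDist Con),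
    (∀ i, 0 < p i ∧ p i ≤ 1) ∧ (∑ i, p i) = 1 ∧
    (∀ i, tr C a (μs i)) ∧ (∀ d, μ.f d = ∑ i, p i * (μs i).f d)

/-- μ ≡_R ν : the distributions agree on every R-equivalence class. -/
def DistEquivRel {Con : Type} (R : Con → Con → Prop) (μ ν : FDist Con) : Prop :=
  ∀ c : Con, μ.mass {d | R c d} = ν.mass {d | R c d}

/-- A configuration with no outgoing transitions. -/
def Terminal {Con Act : Type} (tr : Con → Act → FDist Con → Prop) (C : Con) : Prop :=
  ∀ a μ, ¬ tr C a μ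

section Helpers2
open Function Set in
lemma mass_eq_of_saturated {Con : Type} {R : Con → Con → Prop} (hR : Equivalence R)
    (μ ν : FDist Con) (h : ∀ c, μ.mass {d | R c d} = ν.mass {d | R c d})
    (M : Set Con) (hsat : ∀ x ∈ M, ∀ y, R x y → y ∈ M) :
    μ.mass M = ν.mass M := by
  classical
  set W : Set Con := support μ.f ∪ support ν.f with hWdef
  have hWfin : W.Finite := μ.finSupp.union ν.finSupp
  have hMW : (M ∩ W).Finite := hWfin.inter_of_right M
  let sR : Setoid Con := ⟨R, hR⟩
  let F : Finset Con := hMW.toFinset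
  let Q : Finset (Quotient sR) := F.image (Quotient.mk sR)
  let cls : Quotient sR → Set Con := fun q => {d | Quotient.mk sR d = q} ∩ W
  have hclsfin : ∀ q, (cls q).Finite := fun q => hWfin.subset inter_subset_right
  have hdisj : (↑Q : Set (Quotient sR)).PairwiseDisjoint cls := by
    intro q1 _ q2 _ hne
    refine Set.disjoint_left.2 ?_
    rintro d ⟨hd1, _⟩ ⟨hd2, _⟩
    exact hne (hd1 ▸ hd2 ▸ rfl)
  have key : ∀ ρ : FDist Con, support ρ.f ⊆ W →
      ρ.mass M = ∑ᶠ q ∈ (↑Q : Set (Quotient sR)), ρ.mass (cls q) := by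
    intro ρ hρ
    have hU : M ∩ support ρ.f = (⋃ q ∈ (↑Q : Set (Quotient sR)), cls q) ∩ support ρ.f := by
      ext d
      simp only [mem_inter_iff, Set.mem_iUnion]
      constructor
      · rintro ⟨hM, hsupp⟩
        have hdW : d ∈ W := hρ hsupp
        have hdF : d ∈ F := hMW.mem_toFinset.2 ⟨hM, hdW⟩
        exact ⟨⟨Quotient.mk sR d, Finset.mem_coe.2 (Finset.mem_image_of_mem _ hdF),
          rfl, hdW⟩, hsupp⟩
      · rintro ⟨⟨q, hq, hdq, hdW⟩, hsupp⟩
        obtain ⟨x, hxF, hxq⟩ := Finset.mem_image.1 (Finset.mem_coe.1 hq)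
        have hxM : x ∈ M := (hMW.mem_toFinset.1 hxF).1
        have hRdx : R d x := Quotient.exact (hdq.trans hxq.symm)
        exact ⟨hsat x hxM d (hR.symm hRdx), hsupp⟩
    calc ρ.mass M = ∑ᶠ d ∈ ⋃ q ∈ (↑Q : Set (Quotient sR)), cls q, ρ.f d :=
          finsum_mem_inter_support_eq _ _ _ hU
      _ = ∑ᶠ q ∈ (↑Q : Set (Quotient sR)), ∑ᶠ d ∈ cls q, ρ.f d :=
          finsum_mem_biUnion hdisj Q.finite_toSet (fun q _ => hclsfin q)
      _ = ∑ᶠ q ∈ (↑Q : Set (Quotient sR)), ρ.mass (cls q) := rfl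
  have hcls_mass : ∀ ρ : FDist Con, support ρ.f ⊆ W → ∀ x : Con,
      ρ.mass (cls (Quotient.mk sR x)) = ρ.mass {d | R x d} := by
    intro ρ hρ x
    refine finsum_mem_inter_support_eq _ _ _ ?_
    ext d
    simp only [cls, mem_inter_iff, mem_setOf_eq]
    constructor
    · rintro ⟨⟨hdq, _⟩, hsupp⟩
      exact ⟨hR.symm (Quotient.exact hdq), hsupp⟩
    · rintro ⟨hRxd, hsupp⟩
      exact ⟨⟨Quotient.sound (hR.symm hRxd), hρ hsupp⟩, hsupp⟩
  rw [key μ subset_union_left, key ν subset_union_right]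
  refine finsum_mem_congr rfl fun q hq => ?_
  obtain ⟨x, hx⟩ := Quotient.exists_rep q
  rw [← hx, hcls_mass μ subset_union_left x, hcls_mass ν subset_union_right x, h x]

lemma ctrans_single {Con Act : Type} {tr : Con → Act → FDist Con → Prop} {C : Con} {a : Act}
    {μ : FDist Con} (h : tr C a μ) : CTrans tr C a μ :=
  ⟨1, fun _ => 1, fun _ => μ, fun _ => ⟨one_pos, le_refl 1⟩, by simp, fun _ => h,
    fun d => by simp⟩

lemma ctrans_fintype {Con Act : Type} {tr : Con → Act → FDist Con → Prop} {C : Con} {a : Act}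
    {ι : Type} [Fintype ι] (p : ι → ℝ) (μs : ι → FDist Con)
    (hpos : ∀ i, 0 < p i) (hle : ∀ i, p i ≤ 1) (hs : ∑ i, p i = 1)
    (htr : ∀ i, tr C a (μs i)) (ν : FDist Con)
    (hν : ∀ d, ν.f d = ∑ i, p i * (μs i).f d) : CTrans tr C a ν := by
  let e := (Fintype.equivFin ι).symm
  refine ⟨Fintype.card ι, p ∘ e, μs ∘ e, fun i => ⟨hpos _, hle _⟩, ?_, fun i => htr _, ?_⟩
  · show ∑ i, p (e i) = 1
    rw [Equiv.sum_comp e p, hs]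
  · intro d
    show ν.f d = ∑ i, p (e i) * (μs (e i)).f d
    rw [hν d, ← Equiv.sum_comp e (fun i => p i * (μs i).f d)]

lemma not_terminal_of_ctrans {Con Act : Type} {tr : Con → Act → FDist Con → Prop} {C : Con}
    {a : Act} {ν : FDist Con} (h : CTrans tr C a ν) : ¬ Terminal tr C := by
  obtain ⟨n, p, μs, hp, hs, htr, -⟩ := h
  intro hT
  rcases Nat.eq_zero_or_pos n with rfl | hn
  · simp at hs
  · exact hT a (μs ⟨0, hn⟩) (htr _)

end Helpers2

section MainHelpers

variable {Con Act : Type} {tr : Con → Act → FDist Con → Prop}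

lemma ctrans_flatten {R : Con → Con → Prop} {Y Z : Con} {a : Act}
    (hM : ∀ (b : Act) (μ : FDist Con), tr Y b μ → ∃ ν, CTrans tr Z b ν ∧ DistEquivRel R μ ν)
    {μ : FDist Con} (hC : CTrans tr Y a μ) :
    ∃ ν, CTrans tr Z a ν ∧ DistEquivRel R μ ν := by
  obtain ⟨n, p, μs, hp, hs, htr, hf⟩ := hC
  choose ν hν hνd using fun i => hM a (μs i) (htr i)
  choose m q ξ hq hqs hξtr hνf using hν
  let ι := Σ i : Fin n, Fin (m i)
  let w : ι → ℝ := fun x => p x.1 * q x.1 x.2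
  let ζ : ι → FDist Con := fun x => ξ x.1 x.2
  have hw0 : ∀ x, 0 ≤ w x := fun x => mul_nonneg (hp x.1).1.le (hq x.1 x.2).1.le
  have hwsum : ∑ x : ι, w x = 1 := by
    rw [← Finset.univ_sigma_univ, Finset.sum_sigma]
    calc ∑ i, ∑ j, p i * q i j = ∑ i, p i * ∑ j, q i j := by
          exact Finset.sum_congr rfl fun i _ => (Finset.mul_sum _ _ _).symm
      _ = ∑ i, p i := by
          refine Finset.sum_congr rfl fun i _ => ?_
          rw [hqs i, mul_one]
      _ = 1 := hs
  let νt := FDist.comb w ζ hw0 hwsum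
  refine ⟨νt, ctrans_fintype w ζ (fun x => mul_pos (hp x.1).1 (hq x.1 x.2).1)
      (fun x => by
        have := mul_le_mul (hp x.1).2 (hq x.1 x.2).2 (hq x.1 x.2).1.le zero_le_one
        simpa using this)
      hwsum (fun x => hξtr x.1 x.2) νt (fun d => rfl), ?_⟩
  intro c
  set M := {d | R c d} with hM'
  have e1 : μ.mass M = ∑ i, p i * (μs i).mass M := mass_comb μ p μs hf M
  have e2 : νt.mass M = ∑ x : ι, w x * (ζ x).mass M := mass_comb νt w ζ (fun d => rfl) M
  rw [e1, e2, ← Finset.univ_sigma_univ, Finset.sum_sigma]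
  refine Finset.sum_congr rfl fun i _ => ?_
  have e3 : (ν i).mass M = ∑ j, q i j * (ξ i j).mass M := mass_comb (ν i) (q i) (ξ i) (hνf i) M
  calc p i * (μs i).mass M = p i * (ν i).mass M := by rw [hνd i c]
    _ = ∑ j, p i * q i j * (ξ i j).mass M := by
        rw [e3, Finset.mul_sum]
        exact Finset.sum_congr rfl fun j _ => (mul_assoc _ _ _).symm

end MainHelpers

/-- Strong probabilistic bisimulation. -/
def IsStrongBisim {Con Act S : Type} (tr : Con → Act → FDist Con → Prop)
    (ctx : Con → S) (R : Con → Con → Prop) : Prop :=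
  Equivalence R ∧ ∀ C D, R C D →
    ((∀ a μ, tr C a μ → ∃ ν, CTrans tr D a ν ∧ DistEquivRel R μ ν) ∧
     (Terminal tr C → ctx C = ctx D))

/-- Strong probabilistic bisimilarity: union of all strong probabilistic bisimulations. -/
def SBisim {Con Act S : Type} (tr : Con → Act → FDist Con → Prop)
    (ctx : Con → S) (C D : Con) : Prop :=
  ∃ R, IsStrongBisim tr ctx R ∧ R C D

/-- summation preserves strong bisimilarity of configurations, in
the abstract setting where a sum configuration's transitions are exactly the
union of the summands' transitions and its context is the common context. -/
theorem stmt_10 {Con Act S : Type} (tr : Con → Act → FDist Con → Prop) (ctx : Con → S)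
    (sum : Con → Con → Con)
    (hsum : ∀ X Y a μ, tr (sum X Y) a μ ↔ (tr X a μ ∨ tr Y a μ))
    (hctx : ∀ X Y, ctx (sum X Y) = ctx X)
    (c1 c2 d1 d2 : Con) (hc : ctx c1 = ctx c2) (hd : ctx d1 = ctx d2)
    (h1 : SBisim tr ctx c1 d1) (h2 : SBisim tr ctx c2 d2) :
    SBisim tr ctx (sum c1 c2) (sum d1 d2) := by
  classical
  obtain ⟨R1, hR1, hc1⟩ := h1
  obtain ⟨R2, hR2, hc2⟩ := h2
  set s1 := sum c1 c2 with hs1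
  set s2 := sum d1 d2 with hs2
  let r : Con → Con → Prop := fun X Y => R1 X Y ∨ R2 X Y ∨ (X = s1 ∧ Y = s2)
  let R : Con → Con → Prop := Relation.EqvGen r
  have hEq : Equivalence R := Relation.EqvGen.is_equivalence r
  have hR1sub : ∀ x y, R1 x y → R x y := fun x y h => Relation.EqvGen.rel _ _ (Or.inl h)
  have hR2sub : ∀ x y, R2 x y → R x y := fun x y h => Relation.EqvGen.rel _ _ (Or.inr (Or.inl h))
  have coarse : ∀ (R' : Con → Con → Prop), Equivalence R' → (∀ x y, R' x y → R x y) →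
      ∀ μ ν, DistEquivRel R' μ ν → DistEquivRel R μ ν := by
    intro R' hR' hsub μ ν h c
    exact mass_eq_of_saturated hR' μ ν h _
      (fun x hx y hxy => hEq.trans hx (hsub x y hxy))
  -- sum configurations inherit combined transitions from their summands
  have csum_left : ∀ X Y a (ν : FDist Con), CTrans tr X a ν → CTrans tr (sum X Y) a ν := by
    rintro X Y a ν ⟨n, p, μs, hp, hs, htr, hf⟩
    exact ⟨n, p, μs, hp, hs, fun i => (hsum X Y a (μs i)).2 (Or.inl (htr i)), hf⟩
  have csum_right : ∀ X Y a (ν : FDist Con), CTrans tr Y a ν → CTrans tr (sum X Y) a ν := by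
    rintro X Y a ν ⟨n, p, μs, hp, hs, htr, hf⟩
    exact ⟨n, p, μs, hp, hs, fun i => (hsum X Y a (μs i)).2 (Or.inr (htr i)), hf⟩
  let Match : Con → Con → Prop := fun C D =>
    ∀ a μ, tr C a μ → ∃ ν, CTrans tr D a ν ∧ DistEquivRel R μ ν
  -- matching transfers along component bisimulations
  have matchOf : ∀ (R' : Con → Con → Prop), IsStrongBisim tr ctx R' →
      (∀ x y, R' x y → R x y) → ∀ X Y, R' X Y → Match X Y := by
    intro R' hR' hsub X Y hXY a μ hm
    obtain ⟨ν, hcv, hde⟩ := (hR'.2 X Y hXY).1 a μ hm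
    exact ⟨ν, hcv, coarse R' hR'.1 hsub μ ν hde⟩
  have main : ∀ X Y, R X Y → Match X Y ∧ Match Y X ∧
      (Terminal tr X → ctx X = ctx Y) ∧ (Terminal tr Y → ctx Y = ctx X) := by
    intro X Y h
    induction h with
    | rel X Y hr =>
      rcases hr with h' | h' | ⟨hX, hY⟩
      · exact ⟨matchOf R1 hR1 hR1sub X Y h', matchOf R1 hR1 hR1sub Y X (hR1.1.symm h'),
          (hR1.2 X Y h').2, (hR1.2 Y X (hR1.1.symm h')).2⟩
      · exact ⟨matchOf R2 hR2 hR2sub X Y h', matchOf R2 hR2 hR2sub Y X (hR2.1.symm h'),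
          (hR2.2 X Y h').2, (hR2.2 Y X (hR2.1.symm h')).2⟩
      · subst hX; subst hY
        have m12 : Match s1 s2 := by
          intro a μ hm
          rcases (hsum c1 c2 a μ).1 hm with hm' | hm'
          · obtain ⟨ν, hcv, hde⟩ := matchOf R1 hR1 hR1sub c1 d1 hc1 a μ hm'
            exact ⟨ν, csum_left d1 d2 a ν hcv, hde⟩
          · obtain ⟨ν, hcv, hde⟩ := matchOf R2 hR2 hR2sub c2 d2 hc2 a μ hm'
            exact ⟨ν, csum_right d1 d2 a ν hcv, hde⟩
        have m21 : Match s2 s1 := by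
          intro a μ hm
          rcases (hsum d1 d2 a μ).1 hm with hm' | hm'
          · obtain ⟨ν, hcv, hde⟩ := matchOf R1 hR1 hR1sub d1 c1 (hR1.1.symm hc1) a μ hm'
            exact ⟨ν, csum_left c1 c2 a ν hcv, hde⟩
          · obtain ⟨ν, hcv, hde⟩ := matchOf R2 hR2 hR2sub d2 c2 (hR2.1.symm hc2) a μ hm'
            exact ⟨ν, csum_right c1 c2 a ν hcv, hde⟩
        refine ⟨m12, m21, ?_, ?_⟩
        · intro hT
          have hTc1 : Terminal tr c1 := fun a μ hm => hT a μ ((hsum c1 c2 a μ).2 (Or.inl hm))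
          calc ctx s1 = ctx c1 := hctx c1 c2
            _ = ctx d1 := (hR1.2 c1 d1 hc1).2 hTc1
            _ = ctx s2 := (hctx d1 d2).symm
        · intro hT
          have hTd1 : Terminal tr d1 := fun a μ hm => hT a μ ((hsum d1 d2 a μ).2 (Or.inl hm))
          calc ctx s2 = ctx d1 := hctx d1 d2
            _ = ctx c1 := (hR1.2 d1 c1 (hR1.1.symm hc1)).2 hTd1
            _ = ctx s1 := (hctx c1 c2).symm
    | refl X =>
      exact ⟨fun a μ h => ⟨μ, ctrans_single h, fun c => rfl⟩,
        fun a μ h => ⟨μ, ctrans_single h, fun c => rfl⟩, fun _ => rfl, fun _ => rfl⟩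
    | symm X Y h ih => exact ⟨ih.2.1, ih.1, ih.2.2.2, ih.2.2.1⟩
    | trans X Y Z h1 h2 ih1 ih2 =>
      refine ⟨?_, ?_, ?_, ?_⟩
      · intro a μ hm
        obtain ⟨ν, hcv, hde⟩ := ih1.1 a μ hm
        obtain ⟨ξ, hcx, hde2⟩ := ctrans_flatten ih2.1 hcv
        exact ⟨ξ, hcx, fun c => (hde c).trans (hde2 c)⟩
      · intro a μ hm
        obtain ⟨ν, hcv, hde⟩ := ih2.2.1 a μ hm
        obtain ⟨ξ, hcx, hde2⟩ := ctrans_flatten ih1.2.1 hcv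
        exact ⟨ξ, hcx, fun c => (hde c).trans (hde2 c)⟩
      · intro hT
        have hTY : Terminal tr Y := fun a μ hm =>
          not_terminal_of_ctrans (ih1.2.1 a μ hm).choose_spec.1 hT
        exact (ih1.2.2.1 hT).trans (ih2.2.2.1 hTY)
      · intro hT
        have hTY : Terminal tr Y := fun a μ hm =>
          not_terminal_of_ctrans (ih2.1 a μ hm).choose_spec.1 hT
        exact (ih2.2.2.2 hT).trans (ih1.2.2.2 hTY)
  refine ⟨R, ⟨hEq, fun C D h => ⟨(main C D h).1, (main C D h).2.2.1⟩⟩,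
    Relation.EqvGen.rel _ _ (Or.inr (Or.inr ⟨rfl, rfl⟩))⟩
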